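/- arXiv:1103.1165 — 2 statements merged into one kernel-verified Lean document; each statement's English description precedes it below -/
import Mathlib

section
/- If A_i < ∞, then the infimum defining A_i is attained, i.e. B_i = (F_i(A_i)+Δ−F(0))/A_i ∈ ∂F_i(A_i); consequently the linear function t ↦ F(0) + B_i·t is tangent from the point (0, F(0)) to the function F_i + Δ: F(0) + B_i·t ≤ F_i(t) + Δ for every t ≥ 0, with equality at t = A_i. -/
open Set
open scoped Classical

noncomputable section

/-- The nonnegative orthant of `ℝ^d` (with the Euclidean structure). -/
def orthant (d : ℕ) : Set (EuclideanSpace ℝ (Fin d)) := {x | ∀ i, 0 ≤ x i}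

/-- The subdifferential (set of subgradients) of a function `φ : ℝ₊ → ℝ` at a point `t`. -/
def subdiff (φ : ℝ → ℝ) (t : ℝ) : Set ℝ :=
  {v | ∀ s : ℝ, 0 ≤ s → φ t + v * (s - t) ≤ φ s}

/-- `Fi F i t = F (t • e_i)`, the restriction of `F` to the `i`-th coordinate axis. -/
def Fi {d : ℕ} (F : EuclideanSpace ℝ (Fin d) → ℝ) (i : Fin d) (t : ℝ) : ℝ :=
  F (t • EuclideanSpace.single i (1 : ℝ))

/-- The set `{t > 0 : (F_i(t) + Δ - F(0))/t ∈ ∂F_i(t)}` defining `A_i`. -/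
def setA {d : ℕ} (F : EuclideanSpace ℝ (Fin d) → ℝ) (Δ : ℝ) (i : Fin d) : Set ℝ :=
  {t | 0 < t ∧ (Fi F i t + Δ - F 0) / t ∈ subdiff (Fi F i) t}

/-- `A_i` (finite value; `A_i = ∞` corresponds to `setA F Δ i` being empty). -/
def Avar {d : ℕ} (F : EuclideanSpace ℝ (Fin d) → ℝ) (Δ : ℝ) (i : Fin d) : ℝ :=
  sInf (setA F Δ i)

/-- `B_i = (F_i(A_i) + Δ - F(0))/A_i` if `A_i < ∞`, and
`B_i = sup ⋃_{t>0} ∂F_i(t)` otherwise. -/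
def Bvar {d : ℕ} (F : EuclideanSpace ℝ (Fin d) → ℝ) (Δ : ℝ) (i : Fin d) : ℝ :=
  if (setA F Δ i).Nonempty then (Fi F i (Avar F Δ i) + Δ - F 0) / Avar F Δ i
  else sSup (⋃ t ∈ Ioi (0 : ℝ), subdiff (Fi F i) t)

/-- The inner product `⟨B, x⟩`. -/
def Bdot {d : ℕ} (F : EuclideanSpace ℝ (Fin d) → ℝ) (Δ : ℝ)
    (x : EuclideanSpace ℝ (Fin d)) : ℝ :=
  ∑ i, Bvar F Δ i * x i

/-- The set `{t > 0 : F(0) + ⟨B, t·x/‖x‖⟩ ≥ Δ + F(t·x/‖x‖)}` defining `H(x)`. -/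
def setH {d : ℕ} (F : EuclideanSpace ℝ (Fin d) → ℝ) (Δ : ℝ)
    (x : EuclideanSpace ℝ (Fin d)) : Set ℝ :=
  {t | 0 < t ∧ Δ + F ((t / ‖x‖) • x) ≤ F 0 + Bdot F Δ ((t / ‖x‖) • x)}

/-- The game analogue `R` of the concave envelope: `R(0) = F(0)`; for `x ≠ 0`,
`R(x) = F(x) + Δ` if `‖x‖ ≥ H(x)` (i.e. `setH F Δ x` is nonempty with `sInf ≤ ‖x‖`),
and `R(x) = F(0) + ⟨B, x⟩` if `‖x‖ < H(x)`. -/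
def Rfun {d : ℕ} (F : EuclideanSpace ℝ (Fin d) → ℝ) (Δ : ℝ)
    (x : EuclideanSpace ℝ (Fin d)) : ℝ :=
  if x = 0 then F 0
  else if (setH F Δ x).Nonempty ∧ sInf (setH F Δ x) ≤ ‖x‖ then F x + Δ
  else F 0 + Bdot F Δ x

/-- Membership in the class `𝒢`: `f : ℝ^d₊ → ℝ₊` continuous, `F ≤ f ≤ F + Δ`, and `f`
is concave on every convex subset `D` of the orthant on which `f < F + Δ`. -/
def memG {d : ℕ} (F : EuclideanSpace ℝ (Fin d) → ℝ) (Δ : ℝ)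
    (f : EuclideanSpace ℝ (Fin d) → ℝ) : Prop :=
  ContinuousOn f (orthant d) ∧
  (∀ x ∈ orthant d, 0 ≤ f x) ∧
  (∀ x ∈ orthant d, F x ≤ f x ∧ f x ≤ F x + Δ) ∧
  (∀ D : Set (EuclideanSpace ℝ (Fin d)), D ⊆ orthant d → Convex ℝ D →
    (∀ x ∈ D, f x < F x + Δ) → ConcaveOn ℝ D f)

noncomputable section

/-! Write `φ = F_i`. A point `t > 0` lies in `setA` when the slope `v = (φ t + Δ - φ 0) / t`
of the line from `(0, φ 0)` to `(t, φ t + Δ)` is a subgradient of `φ` at `t`. Testing the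
subgradient inequality at `t + 1` gives `v ≤ L`, while `φ t ≥ φ 0 - L t` gives `v t ≥ Δ - L t`;
hence `setA ⊆ [Δ / (2L), ∞)`. Away from `0` the subgradient condition is closed in `t`, so `setA`
is closed and contains its infimum `A_i`. -/

def tangencyPoints (φ : ℝ → ℝ) (Δ : ℝ) : Set ℝ :=
  {t | 0 < t ∧ (φ t + Δ - φ 0) / t ∈ subdiff φ t}

section tangencyPoints

variable {φ : ℝ → ℝ} {Δ t : ℝ}

theorem le_two_mul_mul_of_mem_tangencyPoints {L : NNReal} (hφ : LipschitzOnWith L φ (Ici 0))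
    (ht : t ∈ tangencyPoints φ Δ) : Δ ≤ 2 * L * t := by
  obtain ⟨htpos, hsubgrad⟩ := ht
  set v := (φ t + Δ - φ 0) / t
  have hvt : v * t = φ t + Δ - φ 0 := div_mul_cancel₀ _ htpos.ne'
  have hlip : ∀ s r : ℝ, 0 ≤ s → 0 ≤ r → φ s - φ r ≤ L * |s - r| := fun s r hs hr =>
    (le_abs_self _).trans (by simpa [Real.dist_eq] using hφ.dist_le_mul s hs r hr)
  have hvL : v ≤ L := by
    have hstep : φ (t + 1) - φ t ≤ L := by simpa using hlip (t + 1) t (by linarith) htpos.le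
    have hv := hsubgrad (t + 1) (by linarith)
    rw [add_sub_cancel_left, mul_one] at hv
    linarith
  have h0 : φ 0 - φ t ≤ L * t := by simpa [abs_of_pos htpos] using hlip 0 t le_rfl htpos.le
  linarith [mul_le_mul_of_nonneg_right hvL htpos.le]

theorem isClosed_tangencyPoints_inter_Ici (hφ : ContinuousOn φ (Ici 0)) {c : ℝ} (hc : 0 < c) :
    IsClosed (tangencyPoints φ Δ ∩ Ici c) := by
  have hφc : ContinuousOn φ (Ici c) := hφ.mono (Ici_subset_Ici.2 hc.le)
  have hslope : ContinuousOn (fun t => (φ t + Δ - φ 0) / t) (Ici c) :=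
    (hφc.add continuousOn_const |>.sub continuousOn_const).div
      continuousOn_id fun t ht => (hc.trans_le ht).ne'
  have heq : tangencyPoints φ Δ ∩ Ici c = Ici c ∩
      ⋂ s ∈ Ici (0 : ℝ), {t ∈ Ici c | φ t + (φ t + Δ - φ 0) / t * (s - t) ≤ φ s} := by
    ext t
    simp only [tangencyPoints, subdiff, mem_inter_iff, mem_ofPred_eq, mem_Ici, mem_iInter]
    constructor
    · rintro ⟨⟨-, hsub⟩, htc⟩
      exact ⟨htc, fun s hs => ⟨htc, hsub s hs⟩⟩
    · rintro ⟨htc, hsub⟩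
      exact ⟨⟨hc.trans_le htc, fun s hs => (hsub s hs).2⟩, htc⟩
  rw [heq]
  refine isClosed_Ici.inter <| isClosed_biInter fun s _ =>
    isClosed_Ici.isClosed_le ?_ continuousOn_const
  exact hφc.add (hslope.mul (continuousOn_const.sub continuousOn_id))

theorem csInf_mem_tangencyPoints {L : NNReal} (hφ : LipschitzOnWith L φ (Ici 0)) (hΔ : 0 < Δ)
    (hne : (tangencyPoints φ Δ).Nonempty) : sInf (tangencyPoints φ Δ) ∈ tangencyPoints φ Δ := by
  obtain ⟨t₀, ht₀⟩ := hne
  have hL : 0 < (L : ℝ) := by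
    nlinarith [le_two_mul_mul_of_mem_tangencyPoints hφ ht₀, ht₀.1]
  have hsub : tangencyPoints φ Δ ⊆ Ici (Δ / (2 * L)) := fun t ht => by
    rw [mem_Ici, div_le_iff₀ (by positivity)]
    linarith [le_two_mul_mul_of_mem_tangencyPoints hφ ht]
  have hclosed : IsClosed (tangencyPoints φ Δ) := by
    simpa [inter_eq_left.2 hsub] using
      isClosed_tangencyPoints_inter_Ici (Δ := Δ) hφ.continuousOn (by positivity : 0 < Δ / (2 * L))
  exact hclosed.csInf_mem ⟨t₀, ht₀⟩ ⟨0, fun t ht => ht.1.le⟩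

theorem add_mul_le_of_mem_tangencyPoints (ht : t ∈ tangencyPoints φ Δ) (s : ℝ) (hs : 0 ≤ s) :
    φ 0 + (φ t + Δ - φ 0) / t * s ≤ φ s + Δ := by
  have hvt : (φ t + Δ - φ 0) / t * t = φ t + Δ - φ 0 := div_mul_cancel₀ _ ht.1.ne'
  linarith [ht.2 s hs, mul_sub ((φ t + Δ - φ 0) / t) s t]

end tangencyPoints

section axis

variable {d : ℕ} {F : EuclideanSpace ℝ (Fin d) → ℝ}

theorem Fi_zero (i : Fin d) : Fi F i 0 = F 0 := by
  simp [Fi]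

theorem setA_eq_tangencyPoints (Δ : ℝ) (i : Fin d) : setA F Δ i = tangencyPoints (Fi F i) Δ := by
  simp only [setA, tangencyPoints, Fi_zero]

theorem lipschitzOnWith_Fi {L : NNReal} (hF : LipschitzOnWith L F (orthant d)) (i : Fin d) :
    LipschitzOnWith L (Fi F i) (Ici 0) := by
  have haxis : LipschitzWith 1 fun t : ℝ => t • EuclideanSpace.single i (1 : ℝ) :=
    LipschitzWith.of_dist_le_mul fun s t => by
      simp [dist_eq_norm, ← sub_smul, norm_smul]
  have hmaps : MapsTo (fun t : ℝ => t • EuclideanSpace.single i (1 : ℝ)) (Ici 0) (orthant d) :=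
    fun t ht j => by
      by_cases h : j = i <;> simp [h, mem_Ici.1 ht]
  have h : LipschitzOnWith (L * 1) (Fi F i) (Ici 0) := hF.comp haxis.lipschitzOnWith hmaps
  rwa [mul_one] at h

end axis

theorem A_attained_and_tangent_general {d : ℕ} (Δ : ℝ) (hΔ : 0 < Δ)
    (F : EuclideanSpace ℝ (Fin d) → ℝ)
    (L : NNReal) (hFlip : LipschitzOnWith L F (orthant d))
    (i : Fin d) (hA : (setA F Δ i).Nonempty) :
    Bvar F Δ i = (Fi F i (Avar F Δ i) + Δ - F 0) / Avar F Δ i ∧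
    Bvar F Δ i ∈ subdiff (Fi F i) (Avar F Δ i) ∧
    (∀ t : ℝ, 0 ≤ t → F 0 + Bvar F Δ i * t ≤ Fi F i t + Δ) ∧
    F 0 + Bvar F Δ i * Avar F Δ i = Fi F i (Avar F Δ i) + Δ := by
  have hB : Bvar F Δ i = (Fi F i (Avar F Δ i) + Δ - F 0) / Avar F Δ i := if_pos hA
  rw [setA_eq_tangencyPoints] at hA
  have hmem : Avar F Δ i ∈ tangencyPoints (Fi F i) Δ := by
    simpa only [Avar, setA_eq_tangencyPoints] using
      csInf_mem_tangencyPoints (lipschitzOnWith_Fi hFlip i) hΔ hA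
  have hline := add_mul_le_of_mem_tangencyPoints hmem
  rw [Fi_zero] at hline
  refine ⟨hB, hB ▸ by simpa only [Fi_zero] using hmem.2, fun t ht => hB ▸ hline t ht, ?_⟩
  rw [hB, div_mul_cancel₀ _ hmem.1.ne']
  ring

/-- If `A_i < ∞` (i.e. the defining set is nonempty), the infimum is attained:
`B_i = (F_i(A_i) + Δ - F(0))/A_i ∈ ∂F_i(A_i)`; consequently the line
`t ↦ F(0) + B_i t` is tangent from `(0, F(0))` to `F_i + Δ`:
it lies below `F_i + Δ` on `ℝ₊` with equality at `t = A_i`. -/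
theorem A_attained_and_tangent {d : ℕ} (hd : 0 < d) (Δ : ℝ) (hΔ : 0 < Δ)
    (F : EuclideanSpace ℝ (Fin d) → ℝ)
    (hF0 : ∀ x ∈ orthant d, 0 ≤ F x)
    (hFconv : ConvexOn ℝ (orthant d) F)
    (L : NNReal) (hFlip : LipschitzOnWith L F (orthant d))
    (i : Fin d) (hA : (setA F Δ i).Nonempty) :
    Bvar F Δ i = (Fi F i (Avar F Δ i) + Δ - F 0) / Avar F Δ i ∧
    Bvar F Δ i ∈ subdiff (Fi F i) (Avar F Δ i) ∧
    (∀ t : ℝ, 0 ≤ t → F 0 + Bvar F Δ i * t ≤ Fi F i t + Δ) ∧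
    F 0 + Bvar F Δ i * Avar F Δ i = Fi F i (Avar F Δ i) + Δ :=
  A_attained_and_tangent_general Δ hΔ F L hFlip i hA

end
end
end

section
/- Game put option with small penalty: here d = 1, F(x) = (K−x)^+ for a constant K > 0, and 0 < Δ ≤ K. The function R(x) = K − ((K−Δ)/K)·x for 0 ≤ x < K and R(x) = Δ for x ≥ K belongs to 𝒢 and is its minimal element: R(x) ≤ g(x) for every g ∈ 𝒢 and every x ≥ 0. -/
/-!
For `g ∈ 𝒢` put `u = g - R`. Where `u < 0` we have `g < R ≤ F + Δ`, so `g` is concave there, and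
`R` is convex, so `u` is concave on every interval on which it is negative. Such a continuous `u`
with `u 0 ≥ 0` that is bounded below on `[0, ∞)` is nonnegative: on a bounded component `(a, b)`
of `{u < 0}` concavity keeps `u` above `min (u a) (u b) ≥ 0`, and on an unbounded one `(a, ∞)`
the concave, bounded below `u` is nondecreasing, so `u ≥ u a ≥ 0`.
-/

open Set
open scoped Classical

noncomputable section

/-- Membership in the class `𝒢` (one-dimensional case): `f : ℝ₊ → ℝ₊` is continuous,
`F ≤ f ≤ F + Δ` on `ℝ₊`, and `f` is concave on every interval (convex subset)
`I ⊆ ℝ₊` on which `f < F + Δ`. -/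
def memG1 (F : ℝ → ℝ) (Δ : ℝ) (f : ℝ → ℝ) : Prop :=
  ContinuousOn f (Ici (0 : ℝ)) ∧
  (∀ x ∈ Ici (0 : ℝ), 0 ≤ f x) ∧
  (∀ x ∈ Ici (0 : ℝ), F x ≤ f x ∧ f x ≤ F x + Δ) ∧
  (∀ I : Set ℝ, I ⊆ Ici (0 : ℝ) → Convex ℝ I →
    (∀ x ∈ I, f x < F x + Δ) → ConcaveOn ℝ I f)

theorem ConcaveOn.closure {E : Type*} [AddCommGroup E] [Module ℝ E] [TopologicalSpace E]
    [IsTopologicalAddGroup E] [ContinuousSMul ℝ E] {s : Set E} {f : E → ℝ}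
    (hf : ConcaveOn ℝ s f) (hc : ContinuousOn f (closure s)) :
    ConcaveOn ℝ (closure s) f := by
  refine ⟨hf.1.closure, fun x hx y hy a b ha hb hab => ?_⟩
  let φ : E × E → ℝ := fun p => f (a • p.1 + b • p.2) - (a • f p.1 + b • f p.2)
  have hφ : ContinuousOn φ (_root_.closure (s ×ˢ s)) := by
    rw [closure_prod_eq]
    refine ContinuousOn.sub ?_ ?_
    · exact hc.comp (by fun_prop : Continuous fun p : E × E => a • p.1 + b • p.2).continuousOn
        fun p hp => hf.1.closure hp.1 hp.2 ha hb hab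
    · exact ((hc.comp continuousOn_fst fun p hp => hp.1).const_smul a).add
        ((hc.comp continuousOn_snd fun p hp => hp.2).const_smul b)
  have hφs : φ '' (s ×ˢ s) ⊆ Ici 0 := by
    rintro _ ⟨p, hp, rfl⟩
    exact sub_nonneg.2 (hf.2 hp.1 hp.2 ha hb hab)
  have hxy : (x, y) ∈ _root_.closure (s ×ˢ s) := by rw [closure_prod_eq]; exact ⟨hx, hy⟩
  exact sub_nonneg.1 <|
    closure_minimal hφs isClosed_Ici (hφ.image_closure (mem_image_of_mem φ hxy))

theorem ConcaveOn.monotoneOn_of_bddBelow {f : ℝ → ℝ} {a : ℝ} (hf : ConcaveOn ℝ (Ici a) f)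
    (hb : BddBelow (f '' Ici a)) : MonotoneOn f (Ici a) := by
  intro x hx y hy hxy
  rcases hxy.eq_or_lt with rfl | hxy
  · rfl
  by_contra! hyx
  obtain ⟨M, hM⟩ := hb
  have hMy : M ≤ f y := hM (mem_image_of_mem f hy)
  set σ := (f y - f x) / (y - x)
  have hσ : σ < 0 := div_neg_of_neg_of_pos (by linarith) (by linarith)
  -- far enough to the right, the secant of slope `σ` through `(y, f y)` drops below `M`
  set z := y + (f y - M + 1) / -σ
  have hyz : y < z := lt_add_of_pos_right _ (div_pos (by linarith) (by linarith))
  have hz : z ∈ Ici a := le_trans hy hyz.le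
  have hslope := hf.slope_anti_adjacent hx hz hxy hyz
  rw [div_le_iff₀ (sub_pos.2 hyz)] at hslope
  have hzy : σ * (z - y) = -(f y - M + 1) := by
    simp only [z, add_sub_cancel_left]
    field_simp [hσ.ne]
  linarith [hM (mem_image_of_mem f hz)]

theorem exists_nonneg_and_neg_on_Ioc {u : ℝ → ℝ} {p q : ℝ} (hpq : p ≤ q)
    (hu : ContinuousOn u (Icc p q)) (hp : 0 ≤ u p) :
    ∃ a ∈ Icc p q, 0 ≤ u a ∧ ∀ x ∈ Ioc a q, u x < 0 := by
  have hS : IsCompact (Icc p q ∩ u ⁻¹' Ici 0) :=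
    isCompact_Icc.of_isClosed_subset
      (hu.preimage_isClosed_of_isClosed isClosed_Icc isClosed_Ici) inter_subset_left
  obtain ⟨a, ⟨ha, hua⟩, hmax⟩ := hS.exists_isGreatest ⟨p, left_mem_Icc.2 hpq, hp⟩
  refine ⟨a, ha, hua, fun x hx => ?_⟩
  by_contra! hux
  exact hx.1.not_ge (hmax ⟨⟨ha.1.trans hx.1.le, hx.2⟩, hux⟩)

theorem exists_nonneg_and_neg_on_Ico {u : ℝ → ℝ} {p q : ℝ} (hpq : p ≤ q)
    (hu : ContinuousOn u (Icc p q)) (hq : 0 ≤ u q) :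
    ∃ b ∈ Icc p q, 0 ≤ u b ∧ ∀ x ∈ Ico p b, u x < 0 := by
  have hS : IsCompact (Icc p q ∩ u ⁻¹' Ici 0) :=
    isCompact_Icc.of_isClosed_subset
      (hu.preimage_isClosed_of_isClosed isClosed_Icc isClosed_Ici) inter_subset_left
  obtain ⟨b, ⟨hb, hub⟩, hmin⟩ := hS.exists_isLeast ⟨q, right_mem_Icc.2 hpq, hq⟩
  refine ⟨b, hb, hub, fun x hx => ?_⟩
  by_contra! hux
  exact hx.2.not_ge (hmin ⟨⟨hx.1, hx.2.le.trans hb.2⟩, hux⟩)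

def ConcaveWhereNeg (u : ℝ → ℝ) (s : Set ℝ) : Prop :=
  ∀ I ⊆ s, Convex ℝ I → (∀ x ∈ I, u x < 0) → ConcaveOn ℝ I u

namespace ConcaveWhereNeg

variable {u : ℝ → ℝ} {p q : ℝ}

theorem mono {s t : Set ℝ} (h : ConcaveWhereNeg u t) (hst : s ⊆ t) : ConcaveWhereNeg u s :=
  fun I hI => h I (hI.trans hst)

theorem nonneg_of_Icc (h : ConcaveWhereNeg u (Icc p q)) (hu : ContinuousOn u (Icc p q))
    (hp : 0 ≤ u p) (hq : 0 ≤ u q) : ∀ x ∈ Icc p q, 0 ≤ u x := by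
  intro x hx
  by_contra! hux
  obtain ⟨a, ha, hua, hleft⟩ :=
    exists_nonneg_and_neg_on_Ioc hx.1 (hu.mono (Icc_subset_Icc_right hx.2)) hp
  obtain ⟨b, hb, hub, hright⟩ :=
    exists_nonneg_and_neg_on_Ico hx.2 (hu.mono (Icc_subset_Icc_left hx.1)) hq
  have hax : a < x := ha.2.lt_of_ne (by rintro rfl; linarith)
  have hxb : x < b := hb.1.lt_of_ne (by rintro rfl; linarith)
  have hab : Icc a b ⊆ Icc p q := Icc_subset_Icc ha.1 hb.2
  have hneg : ∀ y ∈ Ioo a b, u y < 0 := fun y hy =>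
    (le_or_gt y x).elim (fun hyx => hleft y ⟨hy.1, hyx⟩) fun hxy => hright y ⟨hxy.le, hy.2⟩
  have hconc := (h _ (Ioo_subset_Icc_self.trans hab) (convex_Ioo a b) hneg).closure
  rw [closure_Ioo (hax.trans hxb).ne] at hconc
  have hmin := hconc (hu.mono hab) |>.min_le_of_mem_Icc (left_mem_Icc.2 (hax.trans hxb).le)
    (right_mem_Icc.2 (hax.trans hxb).le) ⟨hax.le, hxb.le⟩
  linarith [le_min hua hub]

theorem nonneg_of_Ici (h : ConcaveWhereNeg u (Ici p)) (hu : ContinuousOn u (Ici p))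
    (hb : BddBelow (u '' Ici p)) (hp : 0 ≤ u p) : ∀ x ∈ Ici p, 0 ≤ u x := by
  intro x hx
  by_cases hq : ∃ q ∈ Ici x, 0 ≤ u q
  · obtain ⟨q, hxq, huq⟩ := hq
    exact (h.mono Icc_subset_Ici_self).nonneg_of_Icc (hu.mono Icc_subset_Ici_self) hp huq x
      ⟨hx, hxq⟩
  push Not at hq
  obtain ⟨a, ha, hua, hleft⟩ := exists_nonneg_and_neg_on_Ioc hx (hu.mono Icc_subset_Ici_self) hp
  have hsub : Ici a ⊆ Ici p := Ici_subset_Ici.2 ha.1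
  have hneg : ∀ y ∈ Ioi a, u y < 0 := fun y hy =>
    (le_or_gt y x).elim (fun hyx => hleft y ⟨hy, hyx⟩) fun hxy => hq y hxy.le
  have hconc := (h _ (Ioi_subset_Ici_self.trans hsub) (convex_Ioi a) hneg).closure
  rw [closure_Ioi] at hconc
  have hax := (hconc (hu.mono hsub)).monotoneOn_of_bddBelow (hb.mono (image_mono hsub))
    self_mem_Ici ha.2 ha.2
  linarith [hq x self_mem_Ici]

end ConcaveWhereNeg

theorem concaveOn_const_sub_mul (a c : ℝ) {s : Set ℝ} (hs : Convex ℝ s) :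
    ConcaveOn ℝ s fun x => a - c * x :=
  ⟨hs, fun _ _ _ _ t u _ _ htu => le_of_eq <| by
    simp only [smul_eq_mul]; linear_combination a * htu⟩

theorem convexOn_const_sub_mul (a c : ℝ) {s : Set ℝ} (hs : Convex ℝ s) :
    ConvexOn ℝ s fun x => a - c * x :=
  ⟨hs, fun _ _ _ _ t u _ _ htu => ge_of_eq <| by
    simp only [smul_eq_mul]; linear_combination a * htu⟩

section PutMinimal

variable {K Δ : ℝ}

-- `R`, as the maximum of the line through `(0, K)` and `(K, Δ)` and the constant `Δ`.
def putMinimal (K Δ : ℝ) (x : ℝ) : ℝ := max (K - (K - Δ) / K * x) Δ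

theorem continuous_putMinimal : Continuous (putMinimal K Δ) := by
  unfold putMinimal; fun_prop

theorem convexOn_putMinimal : ConvexOn ℝ univ (putMinimal K Δ) :=
  (convexOn_const_sub_mul K _ convex_univ).sup (convexOn_const Δ convex_univ)

theorem delta_le_putMinimal (x : ℝ) : Δ ≤ putMinimal K Δ x :=
  le_max_right _ _

theorem putMinimal_line_sub_delta (hK : 0 < K) (x : ℝ) :
    K - (K - Δ) / K * x - Δ = (K - Δ) * (K - x) / K := by
  field_simp; ring

theorem putMinimal_line_sub_put (hK : 0 < K) (x : ℝ) :
    K - (K - Δ) / K * x - (K - x) = Δ * x / K := by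
  field_simp; ring

theorem delta_le_putMinimal_line (hK : 0 < K) (hΔK : Δ ≤ K) {x : ℝ} (hxK : x ≤ K) :
    Δ ≤ K - (K - Δ) / K * x := by
  refine sub_nonneg.1 ?_
  rw [putMinimal_line_sub_delta hK]
  exact div_nonneg (mul_nonneg (sub_nonneg.2 hΔK) (sub_nonneg.2 hxK)) hK.le

theorem putMinimal_line_le_delta (hK : 0 < K) (hΔK : Δ ≤ K) {x : ℝ} (hKx : K ≤ x) :
    K - (K - Δ) / K * x ≤ Δ := by
  refine sub_nonpos.1 ?_
  rw [putMinimal_line_sub_delta hK]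
  exact div_nonpos_of_nonpos_of_nonneg
    (mul_nonpos_of_nonneg_of_nonpos (sub_nonneg.2 hΔK) (sub_nonpos.2 hKx)) hK.le

theorem putMinimal_eq_ite (hK : 0 < K) (hΔK : Δ ≤ K) (x : ℝ) :
    putMinimal K Δ x = if x < K then K - (K - Δ) / K * x else Δ := by
  split_ifs with hxK
  · exact max_eq_left (delta_le_putMinimal_line hK hΔK hxK.le)
  · exact max_eq_right (putMinimal_line_le_delta hK hΔK (not_lt.1 hxK))

theorem put_le_putMinimal (hK : 0 < K) (hΔ : 0 ≤ Δ) {x : ℝ} (hx : 0 ≤ x) :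
    max (K - x) 0 ≤ putMinimal K Δ x := by
  have h := putMinimal_line_sub_put (Δ := Δ) hK x
  have hΔx : 0 ≤ Δ * x / K := by positivity
  exact max_le_max (by linarith) hΔ

theorem putMinimal_le_put_add (hK : 0 < K) (hΔ : 0 ≤ Δ) (hΔK : Δ ≤ K) (x : ℝ) :
    putMinimal K Δ x ≤ max (K - x) 0 + Δ := by
  refine max_le ?_ (le_add_of_nonneg_left (le_max_right _ _))
  rcases le_or_gt x K with hxK | hxK
  · have h := putMinimal_line_sub_put (Δ := Δ) hK x
    have hΔx : Δ * x / K ≤ Δ := (div_le_iff₀ hK).2 (mul_le_mul_of_nonneg_left hxK hΔ)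
    linarith [le_max_left (K - x) 0]
  · exact (putMinimal_line_le_delta hK hΔK hxK.le).trans
      (le_add_of_nonneg_left (le_max_right _ _))

theorem putMinimal_le (hK : 0 < K) (hΔK : Δ ≤ K) {x : ℝ} (hx : 0 ≤ x) :
    putMinimal K Δ x ≤ K :=
  max_le (sub_le_self _ (mul_nonneg (div_nonneg (sub_nonneg.2 hΔK) hK.le) hx)) hΔK

theorem memG1_putMinimal (hK : 0 < K) (hΔ : 0 ≤ Δ) (hΔK : Δ ≤ K) :
    memG1 (fun x => max (K - x) 0) Δ (putMinimal K Δ) := by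
  refine ⟨continuous_putMinimal.continuousOn, fun x _ => hΔ.trans (delta_le_putMinimal x),
    fun x hx => ⟨put_le_putMinimal hK hΔ hx, putMinimal_le_put_add hK hΔ hΔK x⟩,
    fun I _ hI hlt => ?_⟩
  have hIK : ∀ x ∈ I, x < K := fun x hx => by
    by_contra! hKx
    have h := hlt x hx
    dsimp only at h
    rw [max_eq_right (by linarith)] at h
    linarith [delta_le_putMinimal (K := K) (Δ := Δ) x]
  exact (concaveOn_const_sub_mul K _ hI).congr fun x hx => by
    rw [putMinimal_eq_ite hK hΔK, if_pos (hIK x hx)]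

theorem putMinimal_le_of_memG1 (hK : 0 < K) (hΔ : 0 ≤ Δ) (hΔK : Δ ≤ K) {g : ℝ → ℝ}
    (hg : memG1 (fun x => max (K - x) 0) Δ g) : ∀ x ∈ Ici 0, putMinimal K Δ x ≤ g x := by
  obtain ⟨hcont, hpos, hbd, hconc⟩ := hg
  have hneg : ConcaveWhereNeg (g - putMinimal K Δ) (Ici 0) := fun I hI hIc hlt =>
    (hconc I hI hIc fun x hx => (sub_neg.1 (hlt x hx)).trans_le
      (putMinimal_le_put_add hK hΔ hΔK x)).sub (convexOn_putMinimal.subset (subset_univ I) hIc)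
  have hbdd : BddBelow ((g - putMinimal K Δ) '' Ici 0) := by
    refine ⟨-K, ?_⟩
    rintro _ ⟨x, hx, rfl⟩
    simp only [Pi.sub_apply]
    linarith [hpos x hx, putMinimal_le hK hΔK hx]
  have h0 : 0 ≤ (g - putMinimal K Δ) 0 := by
    have hg0 := (hbd 0 self_mem_Ici).1
    simp only [sub_zero, max_eq_left hK.le] at hg0
    simp only [Pi.sub_apply]
    linarith [putMinimal_le hK hΔK le_rfl]
  exact fun x hx => sub_nonneg.1 <|
    hneg.nonneg_of_Ici (hcont.sub continuous_putMinimal.continuousOn) hbdd h0 x hx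

end PutMinimal

/-- Game put option with small penalty (`0 < Δ ≤ K`): with `F(x) = (K - x)⁺`, the
function `R(x) = K - ((K - Δ)/K)x` for `x < K`, `R(x) = Δ` for `x ≥ K` belongs to `𝒢`
and is its minimal element. -/
theorem put_small_penalty (K Δ : ℝ) (hK : 0 < K) (hΔ : 0 < Δ) (hΔK : Δ ≤ K) :
    memG1 (fun x => max (K - x) 0) Δ
      (fun x => if x < K then K - (K - Δ) / K * x else Δ) ∧
    ∀ g : ℝ → ℝ, memG1 (fun x => max (K - x) 0) Δ g →
      ∀ x ∈ Ici (0 : ℝ), (if x < K then K - (K - Δ) / K * x else Δ) ≤ g x := by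
  simp only [← putMinimal_eq_ite hK hΔK]
  exact ⟨memG1_putMinimal hK hΔ.le hΔK, fun g hg => putMinimal_le_of_memG1 hK hΔ.le hΔK hg⟩

end
end
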